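/- arXiv:1208.0783 — 5 statements merged into one kernel-verified Lean document; each statement's English description precedes it below -/
import Mathlib

section
/- Let μ be a finite measure on X with total mass m > 0 and K : X → (0,∞) measurable with all relevant powers integrable. For p ≥ 1 and n ≥ 2 (p ≠ -n), define Ω_p = ∫ K^{p/(n+p)} dμ and Ω = Ω_1 = ∫ K^{1/(n+1)} dμ, and set V° = (1/n)∫ K dμ, V = m/n. Then Ω_p^{n+p} / V^{n-p} ≤ n^{p-1} (V·V°)^{p-1} · Ω^{n+1}/V^{n-1}, with equality iff p = 1 or K is constant μ-a.e. -/
/-!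
Put `t = (p - 1) / (n + p) ∈ [0, 1)`, `w = K ^ (1 / (n + 1))` and `g = K ^ (n / (n + 1))`, so that
`w * g = K` and `w * g ^ t = K ^ (p / (n + p))`. Jensen's inequality for the concave map `x ↦ x ^ t`
with respect to the finite measure `w • μ` gives `Ω_p ≤ (∫ K) ^ t * Ω ^ (1 - t)`, strictly unless
`K` is a.e. constant, since `x ↦ x ^ t` is strictly concave for `0 < t`. Raising this to the power
`n + p` yields `Ω_p ^ (n + p) ≤ (∫ K) ^ (p - 1) * Ω ^ (n + 1)`, and the powers of `V` and `n` in the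
theorem cancel out of both sides.
-/

open MeasureTheory

section

variable {α : Type*} [MeasurableSpace α]

theorem average_rpow_le_and_eq_iff {ν : Measure α} [IsFiniteMeasure ν] [NeZero ν] {f : α → ℝ}
    {t : ℝ} (ht0 : 0 < t) (ht1 : t < 1) (hf : ∀ᵐ x ∂ν, 0 ≤ f x) (hfi : Integrable f ν)
    (hfti : Integrable (fun x => f x ^ t) ν) :
    ⨍ x, f x ^ t ∂ν ≤ (⨍ x, f x ∂ν) ^ t ∧
      (⨍ x, f x ^ t ∂ν = (⨍ x, f x ∂ν) ^ t ↔ ∃ c, f =ᵐ[ν] fun _ => c) := by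
  have hcont := (Real.continuous_rpow_const ht0.le).continuousOn (s := Set.Ici 0)
  refine ⟨(Real.concaveOn_rpow ht0.le ht1.le).le_map_average hcont isClosed_Ici hf hfi hfti,
    fun h => ?_, fun ⟨c, hc⟩ => ?_⟩
  · rcases (Real.strictConcaveOn_rpow ht0 ht1).ae_eq_const_or_lt_map_average hcont isClosed_Ici
      hf hfi hfti with hconst | hlt
    · exact ⟨_, hconst⟩
    · exact absurd h hlt.ne
  · have hct : (fun x => f x ^ t) =ᵐ[ν] fun _ => c ^ t := hc.mono fun x hx => by simp only [hx]
    rw [average_congr hc, average_congr hct, average_const, average_const]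

theorem integral_mul_rpow_le_and_eq_iff {μ : Measure α} [NeZero μ] {w g : α → ℝ} {t : ℝ}
    (ht0 : 0 < t) (ht1 : t < 1) (hw : ∀ x, 0 < w x) (hg : ∀ᵐ x ∂μ, 0 ≤ g x)
    (hwi : Integrable w μ) (hwgi : Integrable (fun x => w x * g x) μ)
    (hwgti : Integrable (fun x => w x * g x ^ t) μ) :
    ∫ x, w x * g x ^ t ∂μ ≤ (∫ x, w x ∂μ) ^ (1 - t) * (∫ x, w x * g x ∂μ) ^ t ∧
      (∫ x, w x * g x ^ t ∂μ = (∫ x, w x ∂μ) ^ (1 - t) * (∫ x, w x * g x ∂μ) ^ t ↔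
        ∃ c, g =ᵐ[μ] fun _ => c) := by
  set ν := μ.withDensity fun x => ENNReal.ofReal (w x)
  have hd : AEMeasurable (fun x => ENNReal.ofReal (w x)) μ := hwi.aemeasurable.ennreal_ofReal
  have hd_lt_top : ∀ᵐ x ∂μ, ENNReal.ofReal (w x) < ⊤ := ae_of_all _ fun _ => ENNReal.ofReal_lt_top
  have hd_toReal : ∀ x, (ENNReal.ofReal (w x)).toReal = w x :=
    fun x => ENNReal.toReal_ofReal (hw x).le
  have integral_ν : ∀ h : α → ℝ, ∫ x, h x ∂ν = ∫ x, w x * h x ∂μ := fun h => by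
    simp only [ν, integral_withDensity_eq_integral_toReal_smul₀ hd hd_lt_top, hd_toReal,
      smul_eq_mul]
  have integrable_ν : ∀ h : α → ℝ, Integrable h ν ↔ Integrable (fun x => w x * h x) μ := fun h => by
    simp only [ν, integrable_withDensity_iff_integrable_smul₀' hd hd_lt_top, hd_toReal,
      smul_eq_mul]
  have ae_ν : ∀ P : α → Prop, (∀ᵐ x ∂ν, P x) ↔ ∀ᵐ x ∂μ, P x := fun P => by
    simp only [ν, ae_withDensity_iff' hd, ne_eq, ENNReal.ofReal_eq_zero, not_le, hw, true_imp_iff]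
  have : IsFiniteMeasure ν := isFiniteMeasure_withDensity_ofReal hwi.2
  have : NeZero ν := ⟨fun hν => NeZero.ne μ <| ae_eq_bot.1 <|
    Filter.eventually_false_iff_eq_bot.1 <| (ae_ν _).1 <| by simp [hν]⟩
  have hν_univ : ν.real Set.univ = ∫ x, w x ∂μ := by
    simpa using integral_ν fun _ => 1
  have hW : 0 < ∫ x, w x ∂μ := hν_univ ▸ measureReal_univ_pos
  have average_ν : ∀ h : α → ℝ, ⨍ x, h x ∂ν = (∫ x, w x ∂μ)⁻¹ * ∫ x, w x * h x ∂μ := fun h => by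
    rw [average_eq, hν_univ, integral_ν, smul_eq_mul]
  have hI : 0 ≤ ∫ x, w x * g x ∂μ :=
    integral_nonneg_of_ae (hg.mono fun x hx => mul_nonneg (hw x).le hx)
  have rpow_average : (⨍ x, g x ∂ν) ^ t =
      (∫ x, w x ∂μ)⁻¹ * ((∫ x, w x ∂μ) ^ (1 - t) * (∫ x, w x * g x ∂μ) ^ t) := by
    rw [average_ν, Real.mul_rpow (inv_nonneg.2 hW.le) hI, Real.inv_rpow hW.le,
      Real.rpow_sub hW, Real.rpow_one]
    field_simp
  obtain ⟨hle, heq⟩ := average_rpow_le_and_eq_iff ht0 ht1 ((ae_ν _).2 hg)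
    ((integrable_ν _).2 hwgi) ((integrable_ν _).2 hwgti)
  rw [average_ν, rpow_average, mul_le_mul_iff_right₀ (inv_pos.2 hW)] at hle
  rw [average_ν, rpow_average, mul_right_inj' (inv_ne_zero hW.ne')] at heq
  simpa only [Filter.EventuallyEq, ae_ν] using And.intro hle heq

theorem exists_ae_eq_const_rpow_iff {μ : Measure α} {K : α → ℝ} (hK : ∀ x, 0 < K x) {r : ℝ}
    (hr : r ≠ 0) :
    (∃ c, (fun x => K x ^ r) =ᵐ[μ] fun _ => c) ↔ ∃ c, K =ᵐ[μ] fun _ => c := by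
  refine ⟨fun ⟨c, hc⟩ => ⟨c ^ r⁻¹, hc.mono fun x hx => ?_⟩,
    fun ⟨c, hc⟩ => ⟨c ^ r, hc.mono fun x hx => by simp only [hx]⟩⟩
  change K x ^ r = c at hx
  rw [← hx, ← Real.rpow_mul (hK x).le, mul_inv_cancel₀ hr, Real.rpow_one]

theorem integral_rpow_interpolation_le_and_eq_iff {μ : Measure α} [NeZero μ] {K : α → ℝ}
    (hK : ∀ x, 0 < K x) {n p : ℝ} (hn : 0 < n) (hp : 1 ≤ p) (hKi : Integrable K μ)
    (hKpi : Integrable (fun x => K x ^ (p / (n + p))) μ)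
    (hK1i : Integrable (fun x => K x ^ (1 / (n + 1))) μ) :
    (∫ x, K x ^ (p / (n + p)) ∂μ) ^ (n + p) ≤
        (∫ x, K x ∂μ) ^ (p - 1) * (∫ x, K x ^ (1 / (n + 1)) ∂μ) ^ (n + 1) ∧
      ((∫ x, K x ^ (p / (n + p)) ∂μ) ^ (n + p) =
          (∫ x, K x ∂μ) ^ (p - 1) * (∫ x, K x ^ (1 / (n + 1)) ∂μ) ^ (n + 1) ↔
        p = 1 ∨ ∃ c, K =ᵐ[μ] fun _ => c) := by
  rcases hp.eq_or_lt with rfl | hp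
  · simp
  set t := (p - 1) / (n + p)
  have hnp : 0 < n + p := by linarith
  have hweight : ∀ b x, K x ^ (1 / (n + 1)) * (K x ^ (n / (n + 1))) ^ b =
      K x ^ ((1 + n * b) / (n + 1)) := fun b x => by
    rw [← Real.rpow_mul (hK x).le, ← Real.rpow_add (hK x)]
    ring_nf
  have hmass : ∀ x, K x ^ (1 / (n + 1)) * K x ^ (n / (n + 1)) = K x := fun x => by
    simpa [show (1 + n) / (n + 1) = 1 by field_simp; ring] using hweight 1 x
  have hpower : ∀ x, K x ^ (1 / (n + 1)) * (K x ^ (n / (n + 1))) ^ t = K x ^ (p / (n + p)) :=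
    fun x => by rw [hweight]; congr 1; simp only [t]; field_simp; ring
  obtain ⟨hle, heq⟩ := integral_mul_rpow_le_and_eq_iff (w := fun x => K x ^ (1 / (n + 1)))
    (g := fun x => K x ^ (n / (n + 1))) (t := t) (by positivity)
    ((div_lt_one hnp).2 (by linarith)) (fun x => Real.rpow_pos_of_pos (hK x) _)
    (ae_of_all _ fun x => (Real.rpow_pos_of_pos (hK x) _).le) hK1i (by simpa only [hmass])
    (by simpa only [hpower])
  simp only [hmass, hpower] at hle heq
  rw [exists_ae_eq_const_rpow_iff hK (by positivity)] at heq
  have hA : 0 ≤ ∫ x, K x ∂μ := integral_nonneg fun x => (hK x).le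
  have hΩ : 0 ≤ ∫ x, K x ^ (1 / (n + 1)) ∂μ :=
    integral_nonneg fun x => (Real.rpow_pos_of_pos (hK x) _).le
  have hΩp : 0 ≤ ∫ x, K x ^ (p / (n + p)) ∂μ :=
    integral_nonneg fun x => (Real.rpow_pos_of_pos (hK x) _).le
  have hraise : ((∫ x, K x ^ (1 / (n + 1)) ∂μ) ^ (1 - t) * (∫ x, K x ∂μ) ^ t) ^ (n + p) =
      (∫ x, K x ∂μ) ^ (p - 1) * (∫ x, K x ^ (1 / (n + 1)) ∂μ) ^ (n + 1) := by
    rw [Real.mul_rpow (by positivity) (by positivity), ← Real.rpow_mul hΩ, ← Real.rpow_mul hA,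
      mul_comm]
    congr 2
    · simp only [t]; field_simp
    · simp only [t]; field_simp; ring
  rw [← hraise, Real.rpow_left_inj hΩp (by positivity) hnp.ne', or_iff_right hp.ne']
  exact ⟨Real.rpow_le_rpow hΩp hle hnp.le, heq⟩

end

theorem stmt1_general {X : Type*} [MeasurableSpace X] (μ : Measure X)
    (hm : 0 < (μ Set.univ).toReal)
    (K : X → ℝ) (hKpos : ∀ x, 0 < K x)
    (n : ℕ) (hn : 2 ≤ n) (p : ℝ) (hp : 1 ≤ p)
    (hKint : Integrable K μ)
    (hΩp : Integrable (fun x => K x ^ (p / ((n : ℝ) + p))) μ)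
    (hΩ : Integrable (fun x => K x ^ ((1 : ℝ) / ((n : ℝ) + 1))) μ) :
    (∫ x, K x ^ (p / ((n : ℝ) + p)) ∂μ) ^ ((n : ℝ) + p) /
        ((μ Set.univ).toReal / n) ^ ((n : ℝ) - p)
      ≤ (n : ℝ) ^ (p - 1) *
          (((μ Set.univ).toReal / n) * ((1 / (n : ℝ)) * ∫ x, K x ∂μ)) ^ (p - 1) *
          ((∫ x, K x ^ ((1 : ℝ) / ((n : ℝ) + 1)) ∂μ) ^ ((n : ℝ) + 1) /
            ((μ Set.univ).toReal / n) ^ ((n : ℝ) - 1)) ∧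
    ((∫ x, K x ^ (p / ((n : ℝ) + p)) ∂μ) ^ ((n : ℝ) + p) /
        ((μ Set.univ).toReal / n) ^ ((n : ℝ) - p)
      = (n : ℝ) ^ (p - 1) *
          (((μ Set.univ).toReal / n) * ((1 / (n : ℝ)) * ∫ x, K x ∂μ)) ^ (p - 1) *
          ((∫ x, K x ^ ((1 : ℝ) / ((n : ℝ) + 1)) ∂μ) ^ ((n : ℝ) + 1) /
            ((μ Set.univ).toReal / n) ^ ((n : ℝ) - 1)) ↔
      p = 1 ∨ ∃ c : ℝ, ∀ᵐ x ∂μ, K x = c) := by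
  have hn0 : (0 : ℝ) < n := by exact_mod_cast (by omega : 0 < n)
  have : NeZero μ := ⟨by rintro rfl; simp at hm⟩
  set V := (μ Set.univ).toReal / n
  set A := ∫ x, K x ∂μ
  have hV : 0 < V := div_pos hm hn0
  have hA : 0 ≤ A := integral_nonneg fun x => (hKpos x).le
  have hRHS : ∀ B : ℝ, (n : ℝ) ^ (p - 1) * (V * (1 / (n : ℝ) * A)) ^ (p - 1) *
      (B / V ^ ((n : ℝ) - 1)) = A ^ (p - 1) * B / V ^ ((n : ℝ) - p) := fun B => by
    have hVpow : V ^ ((n : ℝ) - p) = V ^ ((n : ℝ) - 1) / V ^ (p - 1) := by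
      rw [← Real.rpow_sub hV]; ring_nf
    rw [Real.mul_rpow hV.le (by positivity), Real.mul_rpow (by positivity) hA, one_div,
      Real.inv_rpow hn0.le, hVpow]
    field_simp
  rw [hRHS, div_le_div_iff_of_pos_right (Real.rpow_pos_of_pos hV _),
    div_left_inj' (Real.rpow_pos_of_pos hV _).ne']
  exact integral_rpow_interpolation_le_and_eq_iff hKpos hn0 hp hKint hΩp hΩ

/-- Abstract form of the inequality
`Ω_p^{n+p}/V^{n-p} ≤ n^{p-1} (V·V°)^{p-1} · Ω^{n+1}/V^{n-1}` for `p ≥ 1`,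
with equality iff `p = 1` or `K` is constant a.e. -/
theorem stmt1 {X : Type*} [MeasurableSpace X] (μ : Measure X) [IsFiniteMeasure μ]
    (hm : 0 < (μ Set.univ).toReal)
    (K : X → ℝ) (hKpos : ∀ x, 0 < K x) (hKmeas : Measurable K)
    (n : ℕ) (hn : 2 ≤ n) (p : ℝ) (hp : 1 ≤ p) (hpn : p ≠ -(n : ℝ))
    (hKint : Integrable K μ)
    (hΩp : Integrable (fun x => K x ^ (p / ((n : ℝ) + p))) μ)
    (hΩ : Integrable (fun x => K x ^ ((1 : ℝ) / ((n : ℝ) + 1))) μ) :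
    (∫ x, K x ^ (p / ((n : ℝ) + p)) ∂μ) ^ ((n : ℝ) + p) /
        ((μ Set.univ).toReal / n) ^ ((n : ℝ) - p)
      ≤ (n : ℝ) ^ (p - 1) *
          (((μ Set.univ).toReal / n) * ((1 / (n : ℝ)) * ∫ x, K x ∂μ)) ^ (p - 1) *
          ((∫ x, K x ^ ((1 : ℝ) / ((n : ℝ) + 1)) ∂μ) ^ ((n : ℝ) + 1) /
            ((μ Set.univ).toReal / n) ^ ((n : ℝ) - 1)) ∧
    ((∫ x, K x ^ (p / ((n : ℝ) + p)) ∂μ) ^ ((n : ℝ) + p) /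
        ((μ Set.univ).toReal / n) ^ ((n : ℝ) - p)
      = (n : ℝ) ^ (p - 1) *
          (((μ Set.univ).toReal / n) * ((1 / (n : ℝ)) * ∫ x, K x ∂μ)) ^ (p - 1) *
          ((∫ x, K x ^ ((1 : ℝ) / ((n : ℝ) + 1)) ∂μ) ^ ((n : ℝ) + 1) /
            ((μ Set.univ).toReal / n) ^ ((n : ℝ) - 1)) ↔
      p = 1 ∨ ∃ c : ℝ, ∀ᵐ x ∂μ, K x = c) :=
  stmt1_general μ hm K hKpos n hn p hp hKint hΩp hΩ
end

section
/- With the same setup (finite measure μ of mass m > 0, K : X → (0,∞) measurable), for 0 ≤ p < 1 the reverse inequality holds: Ω_p^{n+p}/V^{n-p} ≥ n^{p-1}(V·V°)^{p-1}·Ω^{n+1}/V^{n-1}, with equality iff p = 1 or K is constant μ-a.e. -/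
open MeasureTheory Set

/-! With `θ = (n + p)/(n + 1)` one has `1/(n + 1) = θ · p/(n + p) + (1 - θ) · 1`, so
`Ω^{n+1} ≤ Ω_p^{n+p} (∫ K)^{1-p}` is Hölder's interpolation inequality between the moments
`∫ K^{p/(n+p)}` and `∫ K`; once the powers of `V` and `V°` are cleared this is the claim.
The equality case of Hölder comes from strict Jensen for the concave `t ↦ t^θ`, applied to `f/g`
under the measure `g • μ`: equality forces `K^{p/(n+p) - 1}`, hence `K`, to be a.e. constant. -/

lemma Real.rpow_mul_rpow_one_sub {x : ℝ} (hx : 0 ≤ x) (θ : ℝ) : x ^ θ * x ^ (1 - θ) = x := by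
  rw [← Real.rpow_add' hx (by norm_num), add_sub_cancel, Real.rpow_one]

lemma Real.rpow_rpow_mul_rpow_rpow {x : ℝ} (hx : 0 < x) (a b θ : ℝ) :
    (x ^ a) ^ θ * (x ^ b) ^ (1 - θ) = x ^ (θ * a + (1 - θ) * b) := by
  rw [← Real.rpow_mul hx.le, ← Real.rpow_mul hx.le, ← Real.rpow_add hx, mul_comm a, mul_comm b]

lemma lt_rpow_mul_rpow_one_sub_of_inv_mul_lt {G F I θ : ℝ} (hG : 0 ≤ G) (hF : 0 ≤ F)
    (hθ0 : 0 < θ) (hθ1 : θ < 1) (h : G⁻¹ * I < (G⁻¹ * F) ^ θ) : I < F ^ θ * G ^ (1 - θ) := by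
  obtain rfl | hG := hG.eq_or_lt
  · simp [Real.zero_rpow hθ0.ne'] at h
  calc I < G * (G⁻¹ * F) ^ θ := by rwa [← inv_mul_lt_iff₀ hG]
    _ = F ^ θ * G ^ (1 - θ) := by
      rw [Real.mul_rpow (inv_nonneg.2 hG.le) hF, Real.inv_rpow hG.le,
        Real.rpow_one_sub' hG.le (by linarith)]
      field_simp

section Holder

variable {X : Type*} [MeasurableSpace X] {μ : Measure X} {f g : X → ℝ} {θ : ℝ}

lemma integral_withDensity_ofReal (hg : 0 ≤ g) (hgm : Measurable g) (h : X → ℝ) :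
    ∫ x, h x ∂μ.withDensity (fun x => ENNReal.ofReal (g x)) = ∫ x, g x * h x ∂μ := by
  rw [integral_withDensity_eq_integral_toReal_smul hgm.ennreal_ofReal
    (ae_of_all _ fun _ => ENNReal.ofReal_lt_top)]
  simp_rw [ENNReal.toReal_ofReal (hg _), smul_eq_mul]

lemma integrable_withDensity_ofReal_iff (hg : 0 ≤ g) (hgm : Measurable g) {h : X → ℝ} :
    Integrable h (μ.withDensity fun x => ENNReal.ofReal (g x)) ↔
      Integrable (fun x => h x * g x) μ := by
  rw [integrable_withDensity_iff hgm.ennreal_ofReal (ae_of_all _ fun _ => ENNReal.ofReal_lt_top)]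
  simp_rw [ENNReal.toReal_ofReal (hg _)]

theorem ae_eq_const_mul_or_integral_rpow_mul_rpow_lt (hθ0 : 0 < θ) (hθ1 : θ < 1)
    (hf : 0 ≤ f) (hg : ∀ x, 0 < g x) (hgm : Measurable g)
    (hfi : Integrable f μ) (hgi : Integrable g μ)
    (hfgi : Integrable (fun x => f x ^ θ * g x ^ (1 - θ)) μ) :
    (∃ c, 0 ≤ c ∧ f =ᵐ[μ] fun x => c * g x) ∨
      ∫ x, f x ^ θ * g x ^ (1 - θ) ∂μ < (∫ x, f x ∂μ) ^ θ * (∫ x, g x ∂μ) ^ (1 - θ) := by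
  have hg0 : 0 ≤ g := fun x => (hg x).le
  set ν := μ.withDensity fun x => ENNReal.ofReal (g x)
  have : IsFiniteMeasure ν := isFiniteMeasure_withDensity_ofReal hgi.2
  obtain ⟨h, hh0, hhg⟩ : ∃ h : X → ℝ, 0 ≤ h ∧ ∀ x, g x * h x = f x :=
    ⟨fun x => f x / g x, fun x => div_nonneg (hf x) (hg0 x),
      fun x => mul_div_cancel₀ _ (hg x).ne'⟩
  have hhθg : ∀ x, g x * h x ^ θ = f x ^ θ * g x ^ (1 - θ) := fun x => by
    rw [← hhg x, Real.mul_rpow (hg0 x) (hh0 x), mul_right_comm,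
      Real.rpow_mul_rpow_one_sub (hg0 x), mul_comm]
  have hνF : ∫ x, h x ∂ν = ∫ x, f x ∂μ := by
    simp only [ν, integral_withDensity_ofReal hg0 hgm, hhg]
  have hνI : ∫ x, h x ^ θ ∂ν = ∫ x, f x ^ θ * g x ^ (1 - θ) ∂μ := by
    simp only [ν, integral_withDensity_ofReal hg0 hgm, hhθg]
  have hνG : ν.real univ = ∫ x, g x ∂μ := by
    simpa [ν, integral_withDensity_ofReal hg0 hgm] using (integral_const (μ := ν) (1 : ℝ)).symm
  have hhi : Integrable h ν := by
    simpa only [ν, integrable_withDensity_ofReal_iff hg0 hgm, mul_comm, hhg] using hfi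
  have hhθi : Integrable (fun x => h x ^ θ) ν := by
    simpa only [ν, integrable_withDensity_ofReal_iff hg0 hgm, mul_comm, hhθg] using hfgi
  rcases (Real.strictConcaveOn_rpow hθ0 hθ1).ae_eq_const_or_lt_map_average
    (fun t _ => (Real.continuousAt_rpow_const t θ (Or.inr hθ0.le)).continuousWithinAt)
    isClosed_Ici (ae_of_all _ hh0) hhi hhθi with hconst | hlt
  · left
    have hμν : μ ≪ ν := withDensity_absolutelyContinuous' hgm.ennreal_ofReal.aemeasurable
      (ae_of_all _ fun x => (ENNReal.ofReal_pos.2 (hg x)).ne')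
    refine ⟨⨍ x, h x ∂ν, ?_, (hμν.ae_eq hconst).mono fun x hx => ?_⟩
    · rw [average_eq]
      exact smul_nonneg (inv_nonneg.2 measureReal_nonneg) (integral_nonneg hh0)
    · rw [← hhg x, hx, Function.const_apply, mul_comm]
  · right
    simp only [average_eq, smul_eq_mul, hνG, hνF, hνI] at hlt
    exact lt_rpow_mul_rpow_one_sub_of_inv_mul_lt (integral_nonneg hg0) (integral_nonneg hf)
      hθ0 hθ1 hlt

theorem integral_rpow_mul_rpow_of_ae_eq_const_mul (hg : 0 ≤ g) {c : ℝ} (hc : 0 ≤ c)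
    (hfg : f =ᵐ[μ] fun x => c * g x) :
    ∫ x, f x ^ θ * g x ^ (1 - θ) ∂μ = (∫ x, f x ∂μ) ^ θ * (∫ x, g x ∂μ) ^ (1 - θ) := by
  have hG := integral_nonneg (μ := μ) hg
  have hpoint : ∀ᵐ x ∂μ, f x ^ θ * g x ^ (1 - θ) = c ^ θ * g x := hfg.mono fun x hx => by
    rw [hx, Real.mul_rpow hc (hg x), mul_assoc, Real.rpow_mul_rpow_one_sub (hg x)]
  rw [integral_congr_ae hpoint, integral_congr_ae hfg, integral_const_mul, integral_const_mul,
    Real.mul_rpow hc hG, mul_assoc, Real.rpow_mul_rpow_one_sub hG]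

variable (hθ0 : 0 < θ) (hθ1 : θ < 1) (hf : 0 ≤ f) (hg : ∀ x, 0 < g x) (hgm : Measurable g)
    (hfi : Integrable f μ) (hgi : Integrable g μ)
    (hfgi : Integrable (fun x => f x ^ θ * g x ^ (1 - θ)) μ)
include hθ0 hθ1 hf hg hgm hfi hgi hfgi

theorem integral_rpow_mul_rpow_le :
    ∫ x, f x ^ θ * g x ^ (1 - θ) ∂μ ≤ (∫ x, f x ∂μ) ^ θ * (∫ x, g x ∂μ) ^ (1 - θ) := by
  rcases ae_eq_const_mul_or_integral_rpow_mul_rpow_lt hθ0 hθ1 hf hg hgm hfi hgi hfgi with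
    ⟨c, hc, hfg⟩ | hlt
  · exact (integral_rpow_mul_rpow_of_ae_eq_const_mul (fun x => (hg x).le) hc hfg).le
  · exact hlt.le

theorem integral_rpow_mul_rpow_eq_iff :
    ∫ x, f x ^ θ * g x ^ (1 - θ) ∂μ = (∫ x, f x ∂μ) ^ θ * (∫ x, g x ∂μ) ^ (1 - θ) ↔
      ∃ c, 0 ≤ c ∧ f =ᵐ[μ] fun x => c * g x := by
  refine ⟨fun heq => ?_, fun ⟨c, hc, hfg⟩ =>
    integral_rpow_mul_rpow_of_ae_eq_const_mul (fun x => (hg x).le) hc hfg⟩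
  exact (ae_eq_const_mul_or_integral_rpow_mul_rpow_lt hθ0 hθ1 hf hg hgm hfi hgi hfgi).resolve_right
    heq.not_lt

end Holder

section Lyapunov

variable {X : Type*} [MeasurableSpace X] {μ : Measure X} {K : X → ℝ} {a b θ : ℝ}

theorem exists_ae_rpow_eq_const_mul_rpow_iff [NeZero μ] (hK : ∀ x, 0 < K x) (hab : a ≠ b) :
    (∃ c, 0 ≤ c ∧ (fun x => K x ^ a) =ᵐ[μ] fun x => c * K x ^ b) ↔ ∃ c, ∀ᵐ x ∂μ, K x = c := by
  constructor
  · rintro ⟨c, -, hc⟩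
    refine ⟨c ^ (a - b)⁻¹, hc.mono fun x (hx : K x ^ a = c * K x ^ b) => ?_⟩
    have hKc : K x ^ (a - b) = c := by
      rw [Real.rpow_sub (hK x), hx, mul_div_cancel_right₀ _ (Real.rpow_pos_of_pos (hK x) b).ne']
    rw [← hKc, ← Real.rpow_mul (hK x).le, mul_inv_cancel₀ (sub_ne_zero.2 hab), Real.rpow_one]
  · rintro ⟨c, hc⟩
    obtain ⟨x₀, hx₀⟩ := hc.exists
    have hc0 : 0 < c := hx₀ ▸ hK x₀
    refine ⟨c ^ (a - b), (Real.rpow_pos_of_pos hc0 _).le, hc.mono fun x hx => ?_⟩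
    simp only [hx, ← Real.rpow_add hc0, sub_add_cancel]

variable (hθ0 : 0 < θ) (hθ1 : θ < 1) (hK : ∀ x, 0 < K x) (hKm : Measurable K)
    (ha : Integrable (fun x => K x ^ a) μ) (hb : Integrable (fun x => K x ^ b) μ)
    (hab : Integrable (fun x => K x ^ (θ * a + (1 - θ) * b)) μ)
include hθ0 hθ1 hK hKm ha hb hab

theorem integral_rpow_convexComb_le :
    ∫ x, K x ^ (θ * a + (1 - θ) * b) ∂μ ≤
      (∫ x, K x ^ a ∂μ) ^ θ * (∫ x, K x ^ b ∂μ) ^ (1 - θ) := by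
  simp only [← fun x => Real.rpow_rpow_mul_rpow_rpow (hK x) a b θ] at hab ⊢
  exact integral_rpow_mul_rpow_le hθ0 hθ1 (fun x => (Real.rpow_pos_of_pos (hK x) a).le)
    (fun x => Real.rpow_pos_of_pos (hK x) b) (hKm.pow_const b) ha hb hab

theorem integral_rpow_convexComb_eq_iff [NeZero μ] (hne : a ≠ b) :
    ∫ x, K x ^ (θ * a + (1 - θ) * b) ∂μ =
      (∫ x, K x ^ a ∂μ) ^ θ * (∫ x, K x ^ b ∂μ) ^ (1 - θ) ↔ ∃ c, ∀ᵐ x ∂μ, K x = c := by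
  simp only [← fun x => Real.rpow_rpow_mul_rpow_rpow (hK x) a b θ] at hab ⊢
  rw [integral_rpow_mul_rpow_eq_iff hθ0 hθ1 (fun x => (Real.rpow_pos_of_pos (hK x) a).le)
    (fun x => Real.rpow_pos_of_pos (hK x) b) (hKm.pow_const b) ha hb hab,
    exists_ae_rpow_eq_const_mul_rpow_iff hK hne]

end Lyapunov

lemma convexComb_exponent_eq_one_div_add_one {n p : ℝ} (hnp : 0 < n + p) (hn1 : 0 < n + 1) :
    (n + p) / (n + 1) * (p / (n + p)) + (1 - (n + p) / (n + 1)) * 1 = 1 / (n + 1) := by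
  field_simp
  ring

lemma rpow_mul_rpow_one_sub_rpow_add_one {A B n p : ℝ} (hA : 0 ≤ A) (hB : 0 ≤ B) (hn1 : 0 < n + 1) :
    (A ^ ((n + p) / (n + 1)) * B ^ (1 - (n + p) / (n + 1))) ^ (n + 1) =
      A ^ (n + p) * B ^ (1 - p) := by
  rw [Real.mul_rpow (by positivity) (by positivity), ← Real.rpow_mul hA, ← Real.rpow_mul hB]
  congr 2 <;> field_simp; ring

section

variable {X : Type*} [MeasurableSpace X] {μ : Measure X} {K : X → ℝ} {n p : ℝ}
    (hnp : 0 < n + p) (hp1 : p < 1) (hK : ∀ x, 0 < K x) (hKm : Measurable K)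
    (hKi : Integrable K μ) (hΩp : Integrable (fun x => K x ^ (p / (n + p))) μ)
    (hΩ : Integrable (fun x => K x ^ (1 / (n + 1))) μ)
include hnp hp1 hK hKm hKi hΩp hΩ

theorem rpow_integral_rpow_one_div_add_one_le :
    (∫ x, K x ^ (1 / (n + 1)) ∂μ) ^ (n + 1) ≤
      (∫ x, K x ^ (p / (n + p)) ∂μ) ^ (n + p) * (∫ x, K x ∂μ) ^ (1 - p) := by
  have hn1 : 0 < n + 1 := by linarith
  have hθ0 : 0 < (n + p) / (n + 1) := by positivity
  have hθ1 : (n + p) / (n + 1) < 1 := by rw [div_lt_one hn1]; linarith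
  have hA : 0 ≤ ∫ x, K x ^ (p / (n + p)) ∂μ :=
    integral_nonneg fun x => (Real.rpow_pos_of_pos (hK x) _).le
  have hB : 0 ≤ ∫ x, K x ∂μ := integral_nonneg fun x => (hK x).le
  have hC : 0 ≤ ∫ x, K x ^ (1 / (n + 1)) ∂μ :=
    integral_nonneg fun x => (Real.rpow_pos_of_pos (hK x) _).le
  have hθ := integral_rpow_convexComb_le hθ0 hθ1 hK hKm hΩp (b := 1) (by simpa using hKi)
    (by rwa [convexComb_exponent_eq_one_div_add_one hnp hn1])
  rw [convexComb_exponent_eq_one_div_add_one hnp hn1] at hθ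
  simp only [Real.rpow_one] at hθ
  rw [← rpow_mul_rpow_one_sub_rpow_add_one hA hB hn1]
  exact Real.rpow_le_rpow hC hθ hn1.le

theorem rpow_integral_rpow_one_div_add_one_eq_iff [NeZero μ] (hn : n ≠ 0) :
    (∫ x, K x ^ (1 / (n + 1)) ∂μ) ^ (n + 1) =
        (∫ x, K x ^ (p / (n + p)) ∂μ) ^ (n + p) * (∫ x, K x ∂μ) ^ (1 - p) ↔
      ∃ c, ∀ᵐ x ∂μ, K x = c := by
  have hn1 : 0 < n + 1 := by linarith
  have hθ0 : 0 < (n + p) / (n + 1) := by positivity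
  have hθ1 : (n + p) / (n + 1) < 1 := by rw [div_lt_one hn1]; linarith
  have hne : p / (n + p) ≠ 1 := by rw [Ne, div_eq_one_iff_eq hnp.ne']; contrapose! hn; linarith
  have hA : 0 ≤ ∫ x, K x ^ (p / (n + p)) ∂μ :=
    integral_nonneg fun x => (Real.rpow_pos_of_pos (hK x) _).le
  have hB : 0 ≤ ∫ x, K x ∂μ := integral_nonneg fun x => (hK x).le
  have hC : 0 ≤ ∫ x, K x ^ (1 / (n + 1)) ∂μ :=
    integral_nonneg fun x => (Real.rpow_pos_of_pos (hK x) _).le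
  have hθ := integral_rpow_convexComb_eq_iff hθ0 hθ1 hK hKm hΩp (b := 1) (by simpa using hKi)
    (by rwa [convexComb_exponent_eq_one_div_add_one hnp hn1]) hne
  rw [convexComb_exponent_eq_one_div_add_one hnp hn1] at hθ
  simp only [Real.rpow_one] at hθ
  rw [← rpow_mul_rpow_one_sub_rpow_add_one hA hB hn1,
    Real.rpow_left_inj hC (by positivity) hn1.ne', hθ]

end

lemma rpow_mul_rpow_mul_div_rpow_eq_div_div {n V B : ℝ} (hn : 0 < n) (hV : 0 < V) (hB : 0 < B)
    (p Y : ℝ) :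
    n ^ (p - 1) * (V * (1 / n * B)) ^ (p - 1) * (Y / V ^ (n - 1)) =
      Y / B ^ (1 - p) / V ^ (n - p) := by
  rw [← Real.mul_rpow hn.le (by positivity), show n * (V * (1 / n * B)) = V * B by field_simp,
    Real.mul_rpow hV.le hB.le, show n - p = (n - 1) - (p - 1) by ring, Real.rpow_sub hV (n - 1),
    show 1 - p = -(p - 1) by ring, Real.rpow_neg hB.le]
  field_simp

theorem stmt2_general {X : Type*} [MeasurableSpace X] (μ : Measure X)
    (hm : 0 < (μ Set.univ).toReal)
    (K : X → ℝ) (hKpos : ∀ x, 0 < K x) (hKmeas : Measurable K)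
    (n : ℕ) (hn : 2 ≤ n) (p : ℝ) (hp0 : 0 ≤ p) (hp1 : p < 1)
    (hKint : Integrable K μ)
    (hΩp : Integrable (fun x => K x ^ (p / ((n : ℝ) + p))) μ)
    (hΩ : Integrable (fun x => K x ^ ((1 : ℝ) / ((n : ℝ) + 1))) μ) :
    (∫ x, K x ^ (p / ((n : ℝ) + p)) ∂μ) ^ ((n : ℝ) + p) /
        ((μ Set.univ).toReal / n) ^ ((n : ℝ) - p)
      ≥ (n : ℝ) ^ (p - 1) *
          (((μ Set.univ).toReal / n) * ((1 / (n : ℝ)) * ∫ x, K x ∂μ)) ^ (p - 1) *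
          ((∫ x, K x ^ ((1 : ℝ) / ((n : ℝ) + 1)) ∂μ) ^ ((n : ℝ) + 1) /
            ((μ Set.univ).toReal / n) ^ ((n : ℝ) - 1)) ∧
    ((∫ x, K x ^ (p / ((n : ℝ) + p)) ∂μ) ^ ((n : ℝ) + p) /
        ((μ Set.univ).toReal / n) ^ ((n : ℝ) - p)
      = (n : ℝ) ^ (p - 1) *
          (((μ Set.univ).toReal / n) * ((1 / (n : ℝ)) * ∫ x, K x ∂μ)) ^ (p - 1) *
          ((∫ x, K x ^ ((1 : ℝ) / ((n : ℝ) + 1)) ∂μ) ^ ((n : ℝ) + 1) /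
            ((μ Set.univ).toReal / n) ^ ((n : ℝ) - 1)) ↔
      p = 1 ∨ ∃ c : ℝ, ∀ᵐ x ∂μ, K x = c) := by
  have hn0 : (0 : ℝ) < n := by exact_mod_cast (by omega : 0 < n)
  have hnp : 0 < (n : ℝ) + p := by positivity
  have : NeZero μ := ⟨fun h => by simp [h] at hm⟩
  have hB : 0 < ∫ x, K x ∂μ := by
    rw [integral_pos_iff_support_of_nonneg (fun x => (hKpos x).le) hKint,
      Function.support_eq_univ fun x => (hKpos x).ne']
    exact Measure.measure_univ_pos.2 (NeZero.ne μ)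
  rw [rpow_mul_rpow_mul_div_rpow_eq_div_div hn0 (by positivity) hB, ge_iff_le,
    div_le_div_iff_of_pos_right (by positivity), div_le_iff₀ (by positivity),
    div_left_inj' (by positivity), eq_div_iff (by positivity), eq_comm, or_iff_right hp1.ne]
  exact ⟨rpow_integral_rpow_one_div_add_one_le hnp hp1 hKpos hKmeas hKint hΩp hΩ,
    rpow_integral_rpow_one_div_add_one_eq_iff hnp hp1 hKpos hKmeas hKint hΩp hΩ hn0.ne'⟩

/-- Abstract form of the inequality
`Ω_p^{n+p}/V^{n-p} ≥ n^{p-1} (V·V°)^{p-1} · Ω^{n+1}/V^{n-1}` for `0 ≤ p < 1`,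
with equality iff `p = 1` or `K` is constant a.e. -/
theorem stmt2 {X : Type*} [MeasurableSpace X] (μ : Measure X) [IsFiniteMeasure μ]
    (hm : 0 < (μ Set.univ).toReal)
    (K : X → ℝ) (hKpos : ∀ x, 0 < K x) (hKmeas : Measurable K)
    (n : ℕ) (hn : 2 ≤ n) (p : ℝ) (hp0 : 0 ≤ p) (hp1 : p < 1)
    (hKint : Integrable K μ)
    (hΩp : Integrable (fun x => K x ^ (p / ((n : ℝ) + p))) μ)
    (hΩ : Integrable (fun x => K x ^ ((1 : ℝ) / ((n : ℝ) + 1))) μ) :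
    (∫ x, K x ^ (p / ((n : ℝ) + p)) ∂μ) ^ ((n : ℝ) + p) /
        ((μ Set.univ).toReal / n) ^ ((n : ℝ) - p)
      ≥ (n : ℝ) ^ (p - 1) *
          (((μ Set.univ).toReal / n) * ((1 / (n : ℝ)) * ∫ x, K x ∂μ)) ^ (p - 1) *
          ((∫ x, K x ^ ((1 : ℝ) / ((n : ℝ) + 1)) ∂μ) ^ ((n : ℝ) + 1) /
            ((μ Set.univ).toReal / n) ^ ((n : ℝ) - 1)) ∧
    ((∫ x, K x ^ (p / ((n : ℝ) + p)) ∂μ) ^ ((n : ℝ) + p) /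
        ((μ Set.univ).toReal / n) ^ ((n : ℝ) - p)
      = (n : ℝ) ^ (p - 1) *
          (((μ Set.univ).toReal / n) * ((1 / (n : ℝ)) * ∫ x, K x ∂μ)) ^ (p - 1) *
          ((∫ x, K x ^ ((1 : ℝ) / ((n : ℝ) + 1)) ∂μ) ^ ((n : ℝ) + 1) /
            ((μ Set.univ).toReal / n) ^ ((n : ℝ) - 1)) ↔
      p = 1 ∨ ∃ c : ℝ, ∀ᵐ x ∂μ, K x = c) :=
  stmt2_general μ hm K hKpos hKmeas n hn p hp0 hp1 hKint hΩp hΩ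
end

section
/- Let μ be a finite measure of total mass m > 0 and K : X → (0,∞) with K, K·ln K, and all K^{1-1/2^p} integrable, and set V° := (1/m')∫K dμ where m' = ∫ K dμ. Then lim_{p→∞} ( (∫ K^{(2^p-1)/2^p} dμ) / (∫ K dμ) )^{2^p} = exp( -(1/∫K dμ) ∫ K ln K dμ ). -/
/-!
Put `ε = 2⁻ᵖ`. Convexity of `s ↦ a ^ s` traps `(a ^ (1 - ε) - a) / ε` between `-a log a` and
`-a ^ (1 - ε) log a`, so by dominated convergence `(∫ K ^ (1 - ε) - ∫ K) / ε → -∫ K log K`.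
Thus `x = ∫ K ^ (1 - ε) / ∫ K` and `t = 2ᵖ` satisfy `t (x - 1) → c := -(∫ K log K) / ∫ K`, and
then `x ^ t = exp (t log x) → exp c` because `1 - 1/x ≤ log x ≤ x - 1`.
-/

open MeasureTheory Filter Real Topology

theorem Real.tendsto_rpow_of_tendsto_mul_sub_one {α : Type*} {l : Filter α} {t x : α → ℝ}
    {c : ℝ} (ht : Tendsto t l atTop) (h : Tendsto (fun a => t a * (x a - 1)) l (𝓝 c)) :
    Tendsto (fun a => x a ^ t a) l (𝓝 (exp c)) := by
  have hx : Tendsto x l (𝓝 1) := by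
    have h0 : Tendsto (fun a => t a * (x a - 1) * (t a)⁻¹) l (𝓝 (c * 0)) :=
      h.mul ht.inv_tendsto_atTop
    rw [mul_zero] at h0
    refine (zero_add (1 : ℝ) ▸ h0.add_const 1).congr' ?_
    filter_upwards [ht.eventually_gt_atTop 0] with a hta
    field_simp
    ring
  have hx_pos : ∀ᶠ a in l, 0 < x a := hx.eventually (lt_mem_nhds one_pos)
  have hlog : Tendsto (fun a => log (x a) * t a) l (𝓝 c) := by
    have hlower : Tendsto (fun a => t a * (x a - 1) / x a) l (𝓝 c) := by
      have := h.div hx one_ne_zero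
      rwa [div_one] at this
    refine tendsto_of_tendsto_of_tendsto_of_le_of_le' hlower h ?_ ?_
    · filter_upwards [hx_pos, ht.eventually_ge_atTop 0] with a hxa hta
      have := one_sub_inv_le_log_of_pos hxa
      calc t a * (x a - 1) / x a = (1 - (x a)⁻¹) * t a := by field_simp
        _ ≤ log (x a) * t a := by gcongr
    · filter_upwards [hx_pos, ht.eventually_ge_atTop 0] with a hxa hta
      rw [mul_comm]
      gcongr
      exact log_le_sub_one_of_pos hxa
  refine ((continuous_exp.tendsto c).comp hlog).congr' ?_
  filter_upwards [hx_pos] with a hxa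
  simp [rpow_def_of_pos hxa]

theorem Real.sub_rpow_one_sub_le {a : ℝ} (ha : 0 < a) (ε : ℝ) :
    a - a ^ (1 - ε) ≤ ε * (a * log a) := by
  have h := add_one_le_exp (log a * -ε)
  rw [← rpow_def_of_pos ha] at h
  have : a ^ (1 - ε) = a * a ^ (-ε) := by
    rw [sub_eq_add_neg, rpow_add ha, rpow_one]
  nlinarith

theorem Real.mul_rpow_one_sub_mul_log_le_sub {a : ℝ} (ha : 0 < a) (ε : ℝ) :
    ε * (a ^ (1 - ε) * log a) ≤ a - a ^ (1 - ε) := by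
  have h := add_one_le_exp (log a * ε)
  rw [← rpow_def_of_pos ha] at h
  have : a = a ^ (1 - ε) * a ^ ε := by
    rw [← rpow_add ha, sub_add_cancel, rpow_one]
  have := rpow_pos_of_pos ha (1 - ε)
  nlinarith

theorem Real.abs_rpow_one_sub_mul_log_le {a ε : ℝ} (ha : 0 < a) (hε₀ : 0 ≤ ε)
    (hε : ε ≤ 1 / 4) : |a ^ (1 - ε) * log a| ≤ |a * log a| + 4 * a ^ (1 / 2 : ℝ) := by
  rcases le_or_gt 1 a with h1 | h1
  · have hlog : 0 ≤ log a := log_nonneg h1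
    have hpow : a ^ (1 - ε) ≤ a := by
      simpa using rpow_le_rpow_of_exponent_le h1 (by linarith : 1 - ε ≤ 1)
    rw [abs_of_nonneg (by positivity), abs_of_nonneg (by positivity)]
    have := rpow_nonneg ha.le (1 / 2 : ℝ)
    nlinarith
  · have hsplit : a ^ (1 - ε) * log a = log a * a ^ (1 / 4 : ℝ) * a ^ (3 / 4 - ε) := by
      rw [mul_comm (log a), mul_assoc, mul_comm (log a), ← mul_assoc, ← rpow_add ha]
      ring_nf
    have hsmall : |log a * a ^ (1 / 4 : ℝ)| ≤ 4 := by
      simpa using (abs_log_mul_self_rpow_lt a (1 / 4) ha h1.le (by norm_num)).le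
    have hpow : a ^ (3 / 4 - ε) ≤ a ^ (1 / 2 : ℝ) :=
      rpow_le_rpow_of_exponent_ge ha h1.le (by linarith)
    rw [hsplit, abs_mul, abs_of_pos (rpow_pos_of_pos ha _)]
    calc |log a * a ^ (1 / 4 : ℝ)| * a ^ (3 / 4 - ε) ≤ 4 * a ^ (1 / 2 : ℝ) := by
          gcongr
      _ ≤ |a * log a| + 4 * a ^ (1 / 2 : ℝ) := le_add_of_nonneg_left (abs_nonneg _)

theorem Real.tendsto_rpow_one_sub_sub_div {ι : Type*} {l : Filter ι} {ε : ι → ℝ}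
    (hε : Tendsto ε l (𝓝[>] 0)) {a : ℝ} (ha : 0 < a) :
    Tendsto (fun i => (a ^ (1 - ε i) - a) / ε i) l (𝓝 (-(a * log a))) := by
  have hε₀ : Tendsto ε l (𝓝 0) := tendsto_nhdsWithin_iff.mp hε |>.1
  have hpow : Tendsto (fun i => a ^ (1 - ε i)) l (𝓝 a) := by
    have h := (continuousAt_const_rpow ha.ne' (b := 1 - 0)).tendsto.comp (hε₀.const_sub 1)
    rwa [sub_zero, rpow_one] at h
  have hupper : Tendsto (fun i => -(a ^ (1 - ε i) * log a)) l (𝓝 (-(a * log a))) :=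
    (hpow.mul_const _).neg
  refine tendsto_of_tendsto_of_tendsto_of_le_of_le' tendsto_const_nhds hupper ?_ ?_
  · filter_upwards [tendsto_nhdsWithin_iff.mp hε |>.2] with i hi
    rw [le_div_iff₀ hi]
    linarith [sub_rpow_one_sub_le ha (ε i)]
  · filter_upwards [tendsto_nhdsWithin_iff.mp hε |>.2] with i hi
    rw [div_le_iff₀ hi]
    linarith [mul_rpow_one_sub_mul_log_le_sub ha (ε i)]

theorem Real.abs_rpow_one_sub_sub_div_le {a ε : ℝ} (ha : 0 < a) (hε₀ : 0 < ε) (hε : ε ≤ 1 / 4) :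
    |(a ^ (1 - ε) - a) / ε| ≤ 2 * |a * log a| + 4 * a ^ (1 / 2 : ℝ) := by
  have hlower : -(a * log a) ≤ (a ^ (1 - ε) - a) / ε := by
    rw [le_div_iff₀ hε₀]
    linarith [sub_rpow_one_sub_le ha ε]
  have hupper : (a ^ (1 - ε) - a) / ε ≤ -(a ^ (1 - ε) * log a) := by
    rw [div_le_iff₀ hε₀]
    linarith [mul_rpow_one_sub_mul_log_le_sub ha ε]
  have := abs_rpow_one_sub_mul_log_le ha hε₀.le hε
  calc |(a ^ (1 - ε) - a) / ε| ≤ max |-(a * log a)| |-(a ^ (1 - ε) * log a)| :=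
        abs_le_max_abs_abs hlower hupper
    _ ≤ 2 * |a * log a| + 4 * a ^ (1 / 2 : ℝ) := by
        rw [abs_neg, abs_neg]
        exact max_le (by linarith [abs_nonneg (a * log a), rpow_nonneg ha.le (1 / 2 : ℝ)])
          (by linarith [abs_nonneg (a * log a)])

theorem MeasureTheory.tendsto_integral_rpow_one_sub_sub_div {X : Type*} [MeasurableSpace X]
    {μ : Measure X} {ι : Type*} {l : Filter ι} [l.IsCountablyGenerated] {ε : ι → ℝ}
    (hε : Tendsto ε l (𝓝[>] 0)) {K : X → ℝ} (hK : ∀ x, 0 < K x) (hKint : Integrable K μ)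
    (hKlog : Integrable (fun x => K x * log (K x)) μ)
    (hKsqrt : Integrable (fun x => K x ^ (1 / 2 : ℝ)) μ)
    (hKε : ∀ᶠ i in l, Integrable (fun x => K x ^ (1 - ε i)) μ) :
    Tendsto (fun i => ((∫ x, K x ^ (1 - ε i) ∂μ) - ∫ x, K x ∂μ) / ε i) l
      (𝓝 (-∫ x, K x * log (K x) ∂μ)) := by
  have hε_small : ∀ᶠ i in l, ε i ∈ Set.Ioc 0 (1 / 4) :=
    hε (Ioc_mem_nhdsGT (by norm_num))
  have hDCT := tendsto_integral_filter_of_dominated_convergence (μ := μ)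
    (F := fun i x => (K x ^ (1 - ε i) - K x) / ε i)
    (fun x => 2 * |K x * log (K x)| + 4 * K x ^ (1 / 2 : ℝ))
    (hKε.mono fun i hi => ((hi.sub hKint).div_const _).aestronglyMeasurable)
    (hε_small.mono fun i hi => ae_of_all _ fun x =>
      abs_rpow_one_sub_sub_div_le (hK x) hi.1 hi.2)
    ((hKlog.abs.const_mul 2).add (hKsqrt.const_mul 4))
    (ae_of_all _ fun x => tendsto_rpow_one_sub_sub_div hε (hK x))
  rw [integral_neg] at hDCT
  refine hDCT.congr' ?_
  filter_upwards [hKε] with i hi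
  rw [integral_div, integral_sub hi hKint]

theorem stmt4_general {X : Type*} [MeasurableSpace X] (μ : Measure X)
    (hm : 0 < (μ Set.univ).toReal)
    (K : X → ℝ) (hKpos : ∀ x, 0 < K x)
    (hKint : Integrable K μ)
    (hKlog : Integrable (fun x => K x * Real.log (K x)) μ)
    (hKp : ∀ p : ℕ, Integrable (fun x => K x ^ ((2 ^ p - 1) / 2 ^ p : ℝ)) μ) :
    Tendsto
      (fun p : ℕ =>
        ((∫ x, K x ^ ((2 ^ p - 1) / 2 ^ p : ℝ) ∂μ) / ∫ x, K x ∂μ) ^ ((2 : ℝ) ^ p))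
      atTop
      (nhds (Real.exp (-(1 / ∫ x, K x ∂μ) * ∫ x, K x * Real.log (K x) ∂μ))) := by
  have hexponent (p : ℕ) : ((2 ^ p - 1) / 2 ^ p : ℝ) = 1 - ((2 : ℝ) ^ p)⁻¹ := by
    field_simp
  simp only [hexponent] at hKp ⊢
  have hI : 0 < ∫ x, K x ∂μ := by
    refine (integral_pos_iff_support_of_nonneg (fun x => (hKpos x).le) hKint).mpr ?_
    simpa [Function.support, (hKpos _).ne'] using ENNReal.toReal_pos_iff.mp hm |>.1
  have hpow : Tendsto (fun p : ℕ => (2 : ℝ) ^ p) atTop atTop :=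
    tendsto_pow_atTop_atTop_of_one_lt one_lt_two
  have hε : Tendsto (fun p : ℕ => ((2 : ℝ) ^ p)⁻¹) atTop (𝓝[>] 0) :=
    tendsto_inv_atTop_nhdsGT_zero.comp hpow
  have hderiv := tendsto_integral_rpow_one_sub_sub_div hε hKpos hKint hKlog
    (by convert hKp 1 using 4; norm_num) (Eventually.of_forall hKp)
  refine tendsto_rpow_of_tendsto_mul_sub_one hpow ?_
  convert hderiv.div_const (∫ x, K x ∂μ) using 1
  · funext p
    field_simp
  · congr 1
    ring

/-- Abstract form of the alternative definition of the Paouris–Werner invariant: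
`lim_{p→∞} ((∫ K^{(2^p-1)/2^p} dμ)/(∫ K dμ))^{2^p} = exp(-(1/∫K dμ) ∫ K ln K dμ)`. -/
theorem stmt4 {X : Type*} [MeasurableSpace X] (μ : Measure X) [IsFiniteMeasure μ]
    (hm : 0 < (μ Set.univ).toReal)
    (K : X → ℝ) (hKpos : ∀ x, 0 < K x) (hKmeas : Measurable K)
    (hKint : Integrable K μ)
    (hKlog : Integrable (fun x => K x * Real.log (K x)) μ)
    (hKp : ∀ p : ℕ, Integrable (fun x => K x ^ ((2 ^ p - 1) / 2 ^ p : ℝ)) μ) :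
    Tendsto
      (fun p : ℕ =>
        ((∫ x, K x ^ ((2 ^ p - 1) / 2 ^ p : ℝ) ∂μ) / ∫ x, K x ∂μ) ^ ((2 : ℝ) ^ p))
      atTop
      (nhds (Real.exp (-(1 / ∫ x, K x ∂μ) * ∫ x, K x * Real.log (K x) ∂μ))) :=
  stmt4_general μ hm K hKpos hKint hKlog hKp
end

section
/- Let μ be a probability measure and K : X → (0,∞) with K and K ln K integrable. Then ∫ K ln K dμ ≥ (∫ K dμ)·ln(∫ K dμ), with equality iff K is constant μ-a.e. Consequently, with m' := ∫ K dμ, one has exp( -(1/m')∫ K ln K dμ ) · m'² ≤ (∫ √K dμ)². -/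
open MeasureTheory

lemma aux_tangent {x m : ℝ} (hx : 0 < x) (hm : 0 < m) :
    0 ≤ x * Real.log x - x * Real.log m - (x - m) := by
  have h : Real.log m - Real.log x ≤ m / x - 1 := by
    have := Real.log_le_sub_one_of_pos (div_pos hm hx)
    rwa [Real.log_div hm.ne' hx.ne'] at this
  have h2 : x * (m / x - 1) = m - x := by field_simp
  nlinarith [mul_le_mul_of_nonneg_left h hx.le]

lemma aux_strict {x m : ℝ} (hx : 0 < x) (hm : 0 < m) (hne : x ≠ m) :
    0 < x * Real.log x - x * Real.log m - (x - m) := by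
  have hd : m / x ≠ 1 := by
    intro h; exact hne (by field_simp at h; linarith)
  have h : Real.log m - Real.log x < m / x - 1 := by
    have := Real.log_lt_sub_one_of_pos (div_pos hm hx) hd
    rwa [Real.log_div hm.ne' hx.ne'] at this
  have h2 : x * (m / x - 1) = m - x := by field_simp
  nlinarith [mul_lt_mul_of_pos_left h hx]

/-- For a probability measure `μ`: `∫ K ln K dμ ≥ (∫ K dμ)·ln(∫ K dμ)` with equality iff
`K` is constant a.e.; consequently, with `m' = ∫ K dμ`,
`exp(-(1/m')∫ K ln K dμ) · m'² ≤ (∫ √K dμ)²`. -/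
theorem stmt7 {X : Type*} [MeasurableSpace X] (μ : Measure X) [IsProbabilityMeasure μ]
    (K : X → ℝ) (hKpos : ∀ x, 0 < K x) (hKmeas : Measurable K)
    (hKint : Integrable K μ)
    (hKlog : Integrable (fun x => K x * Real.log (K x)) μ)
    (hKsqrt : Integrable (fun x => Real.sqrt (K x)) μ) :
    (∫ x, K x ∂μ) * Real.log (∫ x, K x ∂μ) ≤ ∫ x, K x * Real.log (K x) ∂μ ∧
    ((∫ x, K x ∂μ) * Real.log (∫ x, K x ∂μ) = ∫ x, K x * Real.log (K x) ∂μ ↔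
      ∃ c : ℝ, ∀ᵐ x ∂μ, K x = c) ∧
    Real.exp (-(1 / ∫ x, K x ∂μ) * ∫ x, K x * Real.log (K x) ∂μ) * (∫ x, K x ∂μ) ^ 2
      ≤ (∫ x, Real.sqrt (K x) ∂μ) ^ 2 := by
  set m : ℝ := ∫ x, K x ∂μ with hm
  set L : ℝ := ∫ x, K x * Real.log (K x) ∂μ with hL
  have hmpos : 0 < m := by
    rw [hm]
    refine (integral_pos_iff_support_of_nonneg (fun x => (hKpos x).le) hKint).2 ?_
    have : Function.support K = Set.univ := by
      ext x; simp [Function.support, (hKpos x).ne']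
    simp [this]
  -- integrable pieces
  have hgint : Integrable (fun x => K x * Real.log (K x) - K x * Real.log m - (K x - m)) μ :=
    ((hKlog.sub (hKint.mul_const (Real.log m))).sub (hKint.sub (integrable_const m)))
  have i1 : Integrable (fun x => K x * Real.log (K x) - K x * Real.log m) μ :=
    hKlog.sub (hKint.mul_const (Real.log m))
  have i2 : Integrable (fun x => K x - m) μ := hKint.sub (integrable_const m)
  have hgval : ∫ x, (K x * Real.log (K x) - K x * Real.log m - (K x - m)) ∂μ
      = L - m * Real.log m := by
    rw [integral_sub i1 i2, integral_sub hKlog (hKint.mul_const (Real.log m)),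
      integral_sub hKint (integrable_const m), integral_mul_const]
    simp [← hm, ← hL]
  have hgnn : 0 ≤ᵐ[μ] fun x => K x * Real.log (K x) - K x * Real.log m - (K x - m) :=
    Filter.Eventually.of_forall fun x => aux_tangent (hKpos x) hmpos
  -- Part 1
  have h1 : m * Real.log m ≤ L := by
    have := integral_nonneg_of_ae hgnn
    rw [hgval] at this; linarith
  refine ⟨h1, ?_, ?_⟩
  · constructor
    · intro heq
      have hz : ∫ x, (K x * Real.log (K x) - K x * Real.log m - (K x - m)) ∂μ = 0 := by
        rw [hgval]; linarith
      have := (integral_eq_zero_iff_of_nonneg_ae hgnn hgint).1 hz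
      refine ⟨m, ?_⟩
      filter_upwards [this] with x hx
      by_contra hne
      have := aux_strict (hKpos x) hmpos hne
      simp only [Pi.zero_apply] at hx
      linarith [hx.le, this]
    · rintro ⟨c, hc⟩
      have hmc : m = c := by
        rw [hm, integral_congr_ae hc]; simp
      have hLc : L = c * Real.log c := by
        rw [hL, integral_congr_ae (hc.mono fun x hx => by rw [hx])]; simp
      rw [hmc, hLc]
  · -- Part 3
    set a : ℝ := (1 / m) * L with ha
    have key : ∀ x, Real.exp (-a / 2) * (K x * (1 + a / 2) - K x * Real.log (K x) / 2)
        ≤ Real.sqrt (K x) := by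
      intro x
      have hx := hKpos x
      have hsq : Real.sqrt (K x) = K x * Real.exp (-(Real.log (K x)) / 2) := by
        have h1 : Real.exp (-(Real.log (K x)) / 2) = (Real.sqrt (K x))⁻¹ := by
          rw [neg_div, Real.exp_neg, ← Real.log_sqrt hx.le,
            Real.exp_log (Real.sqrt_pos.2 hx)]
        rw [h1]
        field_simp
        exact Real.sq_sqrt hx.le
      have hexp : 1 + (a / 2 - Real.log (K x) / 2)
          ≤ Real.exp (a / 2 - Real.log (K x) / 2) := by
        linarith [Real.add_one_le_exp (a / 2 - Real.log (K x) / 2)]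
      have := mul_le_mul_of_nonneg_left hexp (by positivity : (0:ℝ) ≤ K x * Real.exp (-a / 2))
      calc Real.exp (-a / 2) * (K x * (1 + a / 2) - K x * Real.log (K x) / 2)
          = K x * Real.exp (-a / 2) * (1 + (a / 2 - Real.log (K x) / 2)) := by ring
        _ ≤ K x * Real.exp (-a / 2) * Real.exp (a / 2 - Real.log (K x) / 2) := this
        _ = K x * Real.exp (-a / 2 + (a / 2 - Real.log (K x) / 2)) := by
            rw [mul_assoc, ← Real.exp_add]
        _ = K x * Real.exp (-(Real.log (K x)) / 2) := by
            congr 1; ring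
        _ = Real.sqrt (K x) := hsq.symm
    have hlhs_int : Integrable
        (fun x => Real.exp (-a / 2) * (K x * (1 + a / 2) - K x * Real.log (K x) / 2)) μ :=
      (((hKint.mul_const (1 + a / 2)).sub (hKlog.div_const 2)).const_mul _)
    have hlhs_val : ∫ x, Real.exp (-a / 2) * (K x * (1 + a / 2) - K x * Real.log (K x) / 2) ∂μ
        = Real.exp (-a / 2) * m := by
      rw [integral_const_mul,
        integral_sub (hKint.mul_const (1 + a / 2)) (hKlog.div_const 2),
        integral_mul_const, integral_div]
      rw [← hm, ← hL]
      have haL : a * m = L := by rw [ha]; field_simp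
      have : m * (1 + a / 2) - L / 2 = m := by linear_combination haL / 2
      rw [this]
    have hmono : Real.exp (-a / 2) * m ≤ ∫ x, Real.sqrt (K x) ∂μ := by
      rw [← hlhs_val]
      exact integral_mono hlhs_int hKsqrt fun x => key x
    have hnn : 0 ≤ Real.exp (-a / 2) * m := by positivity
    have := mul_self_le_mul_self hnn hmono
    have hexp2 : Real.exp (-(1 / m) * L) = Real.exp (-a / 2) * Real.exp (-a / 2) := by
      rw [← Real.exp_add]; congr 1; rw [ha]; ring
    calc Real.exp (-(1 / m) * L) * m ^ 2
        = (Real.exp (-a / 2) * m) * (Real.exp (-a / 2) * m) := by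
          rw [hexp2]; ring
      _ ≤ (∫ x, Real.sqrt (K x) ∂μ) * (∫ x, Real.sqrt (K x) ∂μ) := this
      _ = (∫ x, Real.sqrt (K x) ∂μ) ^ 2 := (sq _).symm
end

section
/- Let f be a strictly positive smooth function on S^{n-1}, h the support function of K ∈ 𝒦 (smooth boundary, positive Gauss curvature, origin interior), g the support function of another convex body. With m := min f/h, M := max f/h, the mixed volumes satisfy m·V(h,g,h,…,h) ≤ V(f,g,h,…,h) ≤ M·V(h,g,h,…,h), where V is extended multilinearly in its first argument to differences of support functions. -/
open MeasureTheory
open scoped InnerProductSpace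

noncomputable section

/-- Euclidean `n`-space. -/
abbrev Euc (n : ℕ) := EuclideanSpace ℝ (Fin n)

/-- The unit sphere `S^{n-1} ⊂ ℝⁿ`. -/
abbrev Sph (n : ℕ) := Metric.sphere (0 : Euc n) 1

/-- The polar body `K° = {y | ⟨x,y⟩ ≤ 1 for all x ∈ K}`. -/
def polarSet {n : ℕ} (K : Set (Euc n)) : Set (Euc n) :=
  {y | ∀ x ∈ K, ⟪x, y⟫_ℝ ≤ 1}

/-- `K` is a centered ellipsoid: the image of the unit ball under a linear isomorphism. -/
def IsCenteredEllipsoid {n : ℕ} (K : Set (Euc n)) : Prop :=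
  ∃ T : Euc n ≃ₗ[ℝ] Euc n, K = T '' Metric.closedBall (0 : Euc n) 1

/-- The support function of a convex body, restricted to the unit sphere. -/
def suppFn {n : ℕ} (K : ConvexBody (Euc n)) : Sph n → ℝ :=
  fun u => sSup ((fun x => ⟪x, (u : Euc n)⟫_ℝ) '' (K : Set (Euc n)))

/-- `φ` is the support function (on the sphere) of some convex body. -/
def IsSupportFn {n : ℕ} (φ : Sph n → ℝ) : Prop :=
  ∃ K : ConvexBody (Euc n), φ = suppFn K

/-- Data of a convex body `K ∈ C^∞_+` (smooth boundary, positive Gauss curvature,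
origin in the interior) together with the spherical Lebesgue measure `μS`, the Gauss
curvature `curv` as a function of the outer normal, and the mixed curvature operator
`smix : f ↦ s(f, h, …, h)` (mixed discriminant with `n-2` copies of the support
function `h`), subject to their defining identities: `smix` is linear in its first
slot, `s(h,…,h) = 1/curv` is the curvature function of `K`, `∫ h·s(h,…,h) dμS = n·Vol(K)`
and `∫ 𝒦·h·s(h,…,h) dμS = n·Vol(K°)` where `𝒦 = curv/h^{n+1}` is the centro-affine
curvature. -/
structure CentroAffineData (n : ℕ) where
  body : ConvexBody (Euc n)
  origin_mem : 0 ∈ interior (body : Set (Euc n))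
  μS : Measure (Sph n)
  curv : Sph n → ℝ
  curv_pos : ∀ u, 0 < curv u
  curv_cont : Continuous curv
  smix : (Sph n → ℝ) → Sph n → ℝ
  smix_add : ∀ f g, smix (f + g) = smix f + smix g
  smix_smul : ∀ (c : ℝ) (f), smix (c • f) = c • smix f
  smix_h : ∀ u, smix (suppFn body) u = (curv u)⁻¹
  vol_eq : ∫ u, suppFn body u * smix (suppFn body) u ∂μS
      = n * (volume (body : Set (Euc n))).toReal
  polar_vol_eq : ∫ u, (curv u / suppFn body u ^ (n + 1)) * suppFn body u
        * smix (suppFn body) u ∂μS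
      = n * (volume (polarSet (body : Set (Euc n)))).toReal

namespace CentroAffineData

variable {n : ℕ} (D : CentroAffineData n)

/-- The support function of the body. -/
def h : Sph n → ℝ := suppFn D.body

/-- The centro-affine curvature `𝒦 = curv/h^{n+1}` as a function on the sphere. -/
def ca : Sph n → ℝ := fun u => D.curv u / D.h u ^ (n + 1)

/-- `Vol(K)`. -/
def vol : ℝ := (volume (D.body : Set (Euc n))).toReal

/-- `Vol(K°)`. -/
def polarVol : ℝ := (volume (polarSet (D.body : Set (Euc n)))).toReal

/-- The integral `∫_{∂K} g(ν(x)) dμ_K(x)` with respect to the cone measure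
`dμ_K = h·(1/curv) dμ_{S^{n-1}}`. -/
def coneInt (g : Sph n → ℝ) : ℝ := ∫ u, g u * D.h u * D.smix D.h u ∂D.μS

/-- The `p`-affine surface area `Ω_p(K) = ∫_{∂K} 𝒦^{p/(n+p)} dμ_K`. -/
def Ωp (p : ℝ) : ℝ := D.coneInt (fun u => D.ca u ^ (p / (n + p)))

/-- The centro-affine surface area `Ω_n(K) = ∫_{∂K} √𝒦 dμ_K`. -/
def Ωn : ℝ := D.coneInt (fun u => Real.sqrt (D.ca u))

/-- The affine surface area `Ω(K) = Ω_1(K) = ∫_{∂K} 𝒦^{1/(n+1)} dμ_K`. -/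
def Ωaff : ℝ := D.coneInt (fun u => D.ca u ^ ((1 : ℝ) / (n + 1)))

/-- The second-order centro-affine invariant
`Ω_{2,n}(K) = (n(n-1)/2)·Vol(K°) − ((n-1)/2)·∫ h√𝒦 · s(h√𝒦, h, …, h) dμ_S`. -/
def Ω2 : ℝ :=
  (n * (n - 1) / 2) * D.polarVol -
    ((n - 1) / 2) * ∫ u, (D.h u * Real.sqrt (D.ca u)) *
      D.smix (fun v => D.h v * Real.sqrt (D.ca v)) u ∂D.μS

end CentroAffineData

/-- The Aleksandrov body of `f` (the convex body whose support function is the maximal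
support function `≤ f`) has a continuous positive curvature function `sA`. -/
def HasGoodAleksandrovBody {n : ℕ} (D : CentroAffineData n) (f : Sph n → ℝ) : Prop :=
  ∃ (A : ConvexBody (Euc n)) (sA : Sph n → ℝ),
    (∀ u, suppFn A u ≤ f u) ∧
    (∀ L : ConvexBody (Euc n), (∀ u, suppFn L u ≤ f u) → ∀ u, suppFn L u ≤ suppFn A u) ∧
    Continuous sA ∧ (∀ u, 0 < sA u) ∧
    ∫ u, suppFn A u * sA u ∂D.μS = n * (volume (A : Set (Euc n))).toReal

end

lemma suppFn_smul_aux {n : ℕ} (c : ℝ) (hc : 0 ≤ c) (K : ConvexBody (Euc n)) :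
    suppFn (c • K) = c • suppFn K := by
  funext u
  simp only [suppFn, ConvexBody.coe_smul, Pi.smul_apply, smul_eq_mul]
  rw [← smul_eq_mul, ← Real.sSup_smul_of_nonneg hc]
  congr 1
  ext y
  constructor
  · rintro ⟨x, ⟨z, hz, rfl⟩, rfl⟩
    exact ⟨⟪z, (u : Euc n)⟫_ℝ, ⟨z, hz, rfl⟩, by
      simp [real_inner_smul_left, Finset.mul_sum, mul_assoc]⟩
  · rintro ⟨t, ⟨z, hz, rfl⟩, rfl⟩
    exact ⟨c • z, ⟨z, hz, rfl⟩, by simp [real_inner_smul_left, Finset.mul_sum, mul_assoc]⟩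

lemma suppFn_pos_aux {n : ℕ} (K : ConvexBody (Euc n))
    (h0 : 0 ∈ interior (K : Set (Euc n))) (u : Sph n) : 0 < suppFn K u := by
  obtain ⟨ε, hε, hball⟩ := Metric.isOpen_iff.mp isOpen_interior 0 h0
  have hu : ‖(u : Euc n)‖ = 1 := by
    have := u.2
    simpa [mem_sphere_iff_norm] using this
  have hx : (ε / 2) • (u : Euc n) ∈ (K : Set (Euc n)) := by
    apply interior_subset
    apply hball
    simp only [Metric.mem_ball, dist_zero_right, norm_smul, hu, mul_one,
      Real.norm_eq_abs, abs_of_pos (by linarith : (0:ℝ) < ε / 2)]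
    linarith
  have hbdd : BddAbove ((fun x => ⟪x, (u : Euc n)⟫_ℝ) '' (K : Set (Euc n))) :=
    (K.isCompact.image (continuous_id.inner continuous_const)).bddAbove
  have hle : ε / 2 ≤ suppFn K u := by
    have : ⟪(ε / 2) • (u : Euc n), (u : Euc n)⟫_ℝ = ε / 2 := by
      rw [real_inner_smul_left, real_inner_self_eq_norm_sq, hu]; ring
    calc ε / 2 = ⟪(ε / 2) • (u : Euc n), (u : Euc n)⟫_ℝ := this.symm
      _ ≤ _ := le_csSup hbdd ⟨_, hx, rfl⟩
  linarith

/-- Monotonicity Lemma, inequality (6): with `Vmix : f ↦ V(f, g, h, …, h)` the mixed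
volume, extended linearly in its first argument to differences of support functions
(monotone on support functions), and `f` smooth and strictly positive,
`m·V(h,g,h,…,h) ≤ V(f,g,h,…,h) ≤ M·V(h,g,h,…,h)` where `m = min f/h`, `M = max f/h`. -/
theorem stmt9 {n : ℕ} (hn : 2 ≤ n) (K : ConvexBody (Euc n))
    (h0 : 0 ∈ interior (K : Set (Euc n)))
    (K₂ : ConvexBody (Euc n))
    (Vmix : (Sph n → ℝ) → ℝ)
    (hVadd : ∀ φ ψ, Vmix (φ + ψ) = Vmix φ + Vmix ψ)
    (hVsmul : ∀ (c : ℝ) (φ), Vmix (c • φ) = c * Vmix φ)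
    (hVmono : ∀ φ ψ, IsSupportFn φ → IsSupportFn ψ → φ ≤ ψ → Vmix φ ≤ Vmix ψ)
    (f : Sph n → ℝ) (hf_pos : ∀ u, 0 < f u)
    (hf_smooth : ∃ F : Euc n → ℝ, ContDiff ℝ (⊤ : ℕ∞) F ∧ ∀ u : Sph n, f u = F u)
    (hfc : ∃ c : ℝ, 0 ≤ c ∧ IsSupportFn (f + c • suppFn K))
    (m M : ℝ)
    (hm : IsLeast (Set.range fun u => f u / suppFn K u) m)
    (hM : IsGreatest (Set.range fun u => f u / suppFn K u) M) :
    m * Vmix (suppFn K) ≤ Vmix f ∧ Vmix f ≤ M * Vmix (suppFn K) := by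
  obtain ⟨c, hc0, hfc'⟩ := hfc
  set h := suppFn K with hh_def
  have hh : ∀ u, 0 < h u := suppFn_pos_aux K h0
  obtain ⟨u₀, hu₀⟩ := hm.1
  have hm_pos : 0 < m := hu₀ ▸ div_pos (hf_pos u₀) (hh u₀)
  have hM_pos : 0 < M := lt_of_lt_of_le hm_pos (hM.2 hm.1)
  have hmc : (0:ℝ) ≤ m + c := by linarith
  have hMc : (0:ℝ) ≤ M + c := by linarith
  have hsm : IsSupportFn ((m + c) • h) := ⟨(m + c) • K, (suppFn_smul_aux _ hmc K).symm⟩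
  have hsM : IsSupportFn ((M + c) • h) := ⟨(M + c) • K, (suppFn_smul_aux _ hMc K).symm⟩
  have hlow : ((m + c) • h) ≤ (f + c • h) := by
    intro u
    have h1 : m ≤ f u / h u := hm.2 ⟨u, rfl⟩
    have h2 : m * h u ≤ f u := (le_div_iff₀ (hh u)).mp h1
    simp only [Pi.smul_apply, Pi.add_apply, smul_eq_mul]
    nlinarith [hh u]
  have hhigh : (f + c • h) ≤ ((M + c) • h) := by
    intro u
    have h1 : f u / h u ≤ M := hM.2 ⟨u, rfl⟩
    have h2 : f u ≤ M * h u := (div_le_iff₀ (hh u)).mp h1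
    simp only [Pi.smul_apply, Pi.add_apply, smul_eq_mul]
    nlinarith [hh u]
  have e1 : Vmix ((m + c) • h) = (m + c) * Vmix h := hVsmul _ _
  have e2 : Vmix ((M + c) • h) = (M + c) * Vmix h := hVsmul _ _
  have e3 : Vmix (f + c • h) = Vmix f + c * Vmix h := by
    rw [hVadd, hVsmul]
  have i1 : Vmix ((m + c) • h) ≤ Vmix (f + c • h) := hVmono _ _ hsm hfc' hlow
  have i2 : Vmix (f + c • h) ≤ Vmix ((M + c) • h) := hVmono _ _ hfc' hsM hhigh
  rw [e1, e3] at i1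
  rw [e2, e3] at i2
  constructor <;> linarith
end
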